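/- arXiv:2605.25965 — 5 statements merged into one kernel-verified Lean document; each statement's English description precedes it below -/
import Mathlib

section
/- Let V be a persistence module over a field F which is q-tame (every structure map π_{st} with s < t has finite rank) and bounded from below (there is s₀ ∈ ℝ with V_s = 0 for all s < s₀). Suppose V is isomorphic, as a persistence module, to a direct sum ⨁_{i∈I} F_{(a_i,b_i]} of interval modules, where a_i ∈ ℝ and b_i ∈ (a_i, ∞] for each i in an index set I. Then for every ε > 0 and every s ∈ ℝ, the set {i ∈ I : a_i < s and b_i − a_i > ε} is finite (with the convention ∞ − a = ∞). -/
open scoped Classical DirectSum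

noncomputable section

universe u v

/-- A persistence module over a field `F`: a family of `F`-vector spaces indexed by `ℝ`
together with functorial structure maps. -/
structure PersistenceModule (F : Type u) [Field F] where
  space : ℝ → Type v
  [instAddCommGroup : ∀ s, AddCommGroup (space s)]
  [instModule : ∀ s, Module F (space s)]
  map : ∀ {s t : ℝ}, s ≤ t → (space s →ₗ[F] space t)
  map_id : ∀ s : ℝ, map (le_refl s) = LinearMap.id
  map_comp : ∀ {s t r : ℝ} (hst : s ≤ t) (htr : t ≤ r),
    (map htr).comp (map hst) = map (hst.trans htr)

attribute [instance] PersistenceModule.instAddCommGroup PersistenceModule.instModule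

/-- The fibre at `s` of the interval module `F_{(a,b]}`: all of `F` if `a < s ≤ b`, zero
otherwise. -/
def intervalCarrier (F : Type u) [Field F] (a : ℝ) (b : EReal) (s : ℝ) : Submodule F F where
  carrier := {x : F | (a < s ∧ (s : EReal) ≤ b) ∨ x = 0}
  add_mem' := by
    intro x y hx hy
    rcases hx with h | hx0
    · exact Or.inl h
    rcases hy with h | hy0
    · exact Or.inl h
    · exact Or.inr (by rw [hx0, hy0, add_zero])
  zero_mem' := Or.inr rfl
  smul_mem' := by
    intro c x hx
    rcases hx with h | hx0
    · exact Or.inl h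
    · exact Or.inr (by rw [hx0, smul_zero])

/-- The interval persistence module `F_{(a,b]}` (with `b ∈ ℝ ∪ {∞}` an extended real). -/
def IntervalModule (F : Type u) [Field F] (a : ℝ) (b : EReal) : PersistenceModule F where
  space s := intervalCarrier F a b s
  map {s t} h :=
    { toFun := fun x => ⟨if a < t ∧ (t : EReal) ≤ b then (x : F) else 0, by
        by_cases hc : a < t ∧ (t : EReal) ≤ b
        · rw [if_pos hc]; exact Or.inl hc
        · rw [if_neg hc]; exact Or.inr rfl⟩
      map_add' := by
        intro x y
        apply Subtype.ext
        by_cases hc : a < t ∧ (t : EReal) ≤ b <;> simp [hc]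
      map_smul' := by
        intro c x
        apply Subtype.ext
        by_cases hc : a < t ∧ (t : EReal) ≤ b <;> simp [hc] }
  map_id := by
    intro s
    apply LinearMap.ext; intro x
    apply Subtype.ext
    have hx : (a < s ∧ (s : EReal) ≤ b) ∨ (x : F) = 0 := x.2
    by_cases hc : a < s ∧ (s : EReal) ≤ b
    · simp [hc]
    · rcases hx with h | h
      · exact absurd h hc
      · simp [hc, h]
  map_comp := by
    intro s t r hst htr
    apply LinearMap.ext; intro x
    apply Subtype.ext
    have hx : (a < s ∧ (s : EReal) ≤ b) ∨ (x : F) = 0 := x.2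
    by_cases hr : a < r ∧ (r : EReal) ≤ b
    · by_cases ht : a < t ∧ (t : EReal) ≤ b
      · simp [hr, ht]
      · rcases hx with hs | hx0
        · exact absurd ⟨lt_of_lt_of_le hs.1 hst,
            le_trans (EReal.coe_le_coe_iff.mpr htr) hr.2⟩ ht
        · simp [hr, ht, hx0]
    · simp [hr]

/-- `V` is isomorphic, as a persistence module, to the direct sum of the interval modules
`F_{(a i, b i]}`, `i ∈ I`: there are linear equivalences at each filtration level commuting
with the structure maps (those of the direct sum acting componentwise). -/
def IsIsoToIntervalSum {F : Type u} [Field F] (V : PersistenceModule F)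
    {I : Type} (a : I → ℝ) (b : I → EReal) : Prop :=
  ∃ e : ∀ s : ℝ, V.space s ≃ₗ[F] (⨁ i : I, (IntervalModule F (a i) (b i)).space s),
    ∀ (s t : ℝ) (h : s ≤ t) (v : V.space s) (i : I),
      (e t (V.map h v)) i = (IntervalModule F (a i) (b i)).map h ((e s v) i)

/-!
Since `V` vanishes below `s₀`, every nonempty bar starts at or after `s₀`. A bar `(a, b]` with
`a < s` and `b - a > ε` therefore contains a window `[u, u + ε/2]` with `u` on the finite grid
`ℤ • (ε/2) ∩ [s₀, s + ε/2]`. The bars containing a fixed window `[u, w]` yield linearly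
independent vectors in the image of `π_{uw}`, which has finite rank, so each window lies in
only finitely many bars.
-/

theorem DirectSum.linearIndependent_lof {R ι : Type*} [DivisionRing R] [DecidableEq ι]
    {M : ι → Type*} [∀ i, AddCommGroup (M i)] [∀ i, Module R (M i)] {S : Set ι}
    (x : ∀ i : S, M i) (hx : ∀ i, x i ≠ 0) :
    LinearIndependent R fun i : S => DirectSum.lof R ι M i (x i) := by
  rw [linearIndependent_iff']
  intro t g hsum i hi
  have hcomp := congrArg (DirectSum.component R ι M i) hsum
  rw [map_sum, map_zero, Finset.sum_eq_single_of_mem i hi] at hcomp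
  · rw [map_smul, DirectSum.component.lof_self] at hcomp
    exact (smul_eq_zero.mp hcomp).resolve_right (hx i)
  · intro j _ hji
    rw [map_smul, DirectSum.component.of, dif_neg (Subtype.coe_ne_coe.mpr hji), smul_zero]

theorem Int.floor_div_add_one_mul_mem_Ioc {δ : ℝ} (hδ : 0 < δ) (x : ℝ) :
    (⌊x / δ⌋ + 1) * δ ∈ Set.Ioc x (x + δ) := by
  have hfloor_le : (⌊x / δ⌋ : ℝ) * δ ≤ x := (le_div_iff₀ hδ).mp (Int.floor_le _)
  exact ⟨(div_lt_iff₀ hδ).mp (Int.lt_floor_add_one _), by linarith⟩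

namespace IntervalModule

variable {F : Type u} [Field F] {a : ℝ} {b : EReal}

def generator {s : ℝ} (hs : a < s ∧ (s : EReal) ≤ b) : (IntervalModule F a b).space s :=
  ⟨1, Or.inl hs⟩

theorem generator_ne_zero {s : ℝ} (hs : a < s ∧ (s : EReal) ≤ b) :
    (generator hs : (IntervalModule F a b).space s) ≠ 0 :=
  fun h => one_ne_zero (congrArg Subtype.val h)

theorem map_generator {s t : ℝ} (hst : s ≤ t) (hs : a < s ∧ (s : EReal) ≤ b)
    (ht : a < t ∧ (t : EReal) ≤ b) :
    (IntervalModule F a b).map hst (generator hs) = generator ht :=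
  Subtype.ext (if_pos ht)

end IntervalModule

namespace IsIsoToIntervalSum

variable {F : Type u} [Field F] {V : PersistenceModule.{u, v} F} {I : Type} {a : I → ℝ}
  {b : I → EReal}

theorem map_symm_lof
    {e : ∀ s : ℝ, V.space s ≃ₗ[F] (⨁ i : I, (IntervalModule F (a i) (b i)).space s)}
    (he : ∀ (s t : ℝ) (h : s ≤ t) (v : V.space s) (i : I),
      (e t (V.map h v)) i = (IntervalModule F (a i) (b i)).map h ((e s v) i))
    {s t : ℝ} (hst : s ≤ t) (i : I) (x : (IntervalModule F (a i) (b i)).space s) :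
    e t (V.map hst ((e s).symm (DirectSum.lof F I _ i x))) =
      DirectSum.lof F I _ i ((IntervalModule F (a i) (b i)).map hst x) := by
  ext j
  rw [he, LinearEquiv.apply_symm_apply]
  by_cases hij : i = j
  · subst hij
    rw [DirectSum.lof_apply, DirectSum.lof_apply]
  · rw [DirectSum.lof_eq_of, DirectSum.lof_eq_of, DirectSum.of_eq_of_ne _ _ _ (Ne.symm hij),
      DirectSum.of_eq_of_ne _ _ _ (Ne.symm hij), map_zero]

theorem finite_setOf_lt_and_le_of_rank_lt_aleph0 (hiso : IsIsoToIntervalSum V a b) {u w : ℝ}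
    (huw : u ≤ w)
    (hrank : LinearMap.rank (V.map huw) < Cardinal.aleph0) :
    {i : I | a i < u ∧ (w : EReal) ≤ b i}.Finite := by
  obtain ⟨e, he⟩ := hiso
  set T := {i : I | a i < u ∧ (w : EReal) ≤ b i}
  have hu (i : T) : a i < u ∧ (u : EReal) ≤ b i :=
    ⟨i.2.1, (EReal.coe_le_coe_iff.mpr huw).trans i.2.2⟩
  have hw (i : T) : a i < w ∧ (w : EReal) ≤ b i := ⟨i.2.1.trans_le huw, i.2.2⟩
  let v (i : T) : V.space u :=
    (e u).symm (DirectSum.lof F I _ i (IntervalModule.generator (hu i)))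
  have hindep : LinearIndependent F fun i => (V.map huw).rangeRestrict (v i) := by
    refine .of_comp (LinearMap.range (V.map huw)).subtype (.of_comp (e w).toLinearMap ?_)
    convert DirectSum.linearIndependent_lof (M := fun i => (IntervalModule F (a i) (b i)).space w)
      _ fun i : T => IntervalModule.generator_ne_zero (hw i) using 1
    funext i
    simp only [Function.comp_apply, Submodule.coe_subtype, LinearMap.codRestrict_apply,
      LinearEquiv.coe_coe, v]
    rw [map_symm_lof he, IntervalModule.map_generator]
  have hcard : Cardinal.lift.{v} (Cardinal.mk T) < Cardinal.aleph0 := by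
    simpa using hindep.cardinal_lift_le_rank.trans_lt (Cardinal.lift_lt_aleph0.mpr hrank)
  exact Set.finite_coe_iff.mp (Cardinal.mk_lt_aleph0_iff.mp (Cardinal.lift_lt_aleph0.mp hcard))

theorem le_of_forall_eq_zero (hiso : IsIsoToIntervalSum V a b) {s₀ : ℝ}
    (hs₀ : ∀ s : ℝ, s < s₀ → ∀ v : V.space s, v = 0) {i : I} (hi : (a i : EReal) < b i) :
    s₀ ≤ a i := by
  obtain ⟨e, -⟩ := hiso
  by_contra! hlt
  obtain ⟨t, hat, htb⟩ :=
    EReal.exists_between_coe_real (lt_min (EReal.coe_lt_coe_iff.mpr hlt) hi)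
  have ht : a i < t ∧ (t : EReal) ≤ b i := ⟨EReal.coe_lt_coe_iff.mp hat, (lt_min_iff.mp htb).2.le⟩
  have hzero := hs₀ t (EReal.coe_lt_coe_iff.mp (lt_min_iff.mp htb).1)
    ((e t).symm (DirectSum.lof F I _ i (IntervalModule.generator ht)))
  rw [LinearEquiv.map_eq_zero_iff, DirectSum.lof_eq_of,
    map_eq_zero_iff _ (DirectSum.of_injective _)] at hzero
  exact IntervalModule.generator_ne_zero ht hzero

end IsIsoToIntervalSum

theorem stmt0_general (F : Type u) [Field F] (V : PersistenceModule F)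
    (hqtame : ∀ (s t : ℝ) (h : s < t), LinearMap.rank (V.map h.le) < Cardinal.aleph0)
    (hbdd : ∃ s₀ : ℝ, ∀ s : ℝ, s < s₀ → ∀ v : V.space s, v = 0)
    {I : Type} (a : I → ℝ) (b : I → EReal)
    (hiso : IsIsoToIntervalSum V a b)
    (ε : ℝ) (hε : 0 < ε) (s : ℝ) :
    {i : I | a i < s ∧ (ε : EReal) < b i - (a i : EReal)}.Finite := by
  obtain ⟨s₀, hs₀⟩ := hbdd
  have hδ : 0 < ε / 2 := half_pos hε
  refine ((Set.finite_Icc ⌊s₀ / (ε / 2)⌋ ⌊s / (ε / 2)⌋).biUnion fun k _ =>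
    hiso.finite_setOf_lt_and_le_of_rank_lt_aleph0 _
      (hqtame _ _ (lt_add_of_pos_right ((k + 1) * (ε / 2)) hδ))).subset ?_
  rintro i ⟨his, hlen⟩
  have hbar : ((a i + ε : ℝ) : EReal) < b i := by
    rw [EReal.coe_add, add_comm]
    exact (EReal.lt_sub_iff_add_lt (.inl (EReal.coe_ne_bot _))
      (.inl (EReal.coe_ne_top _))).mp hlen
  have hlow : s₀ ≤ a i :=
    hiso.le_of_forall_eq_zero hs₀ ((EReal.coe_lt_coe_iff.mpr (by linarith)).trans hbar)
  obtain ⟨hlt, hle⟩ := Int.floor_div_add_one_mul_mem_Ioc hδ (a i)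
  refine Set.mem_biUnion (x := ⌊a i / (ε / 2)⌋)
    ⟨Int.floor_mono (by gcongr), Int.floor_mono (by gcongr)⟩ ⟨hlt, ?_⟩
  exact (EReal.coe_le_coe_iff.mpr (by linarith)).trans hbar.le

/-- a q-tame, bounded-below persistence module isomorphic to a direct sum of
interval modules `F_{(a i, b i]}` has, for every `ε > 0` and `s ∈ ℝ`, only finitely many
bars of length `> ε` beginning below `s`. -/
theorem stmt0 (F : Type u) [Field F] (V : PersistenceModule F)
    (hqtame : ∀ (s t : ℝ) (h : s < t), LinearMap.rank (V.map h.le) < Cardinal.aleph0)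
    (hbdd : ∃ s₀ : ℝ, ∀ s : ℝ, s < s₀ → ∀ v : V.space s, v = 0)
    {I : Type} (a : I → ℝ) (b : I → EReal) (hab : ∀ i, (a i : EReal) < b i)
    (hiso : IsIsoToIntervalSum V a b)
    (ε : ℝ) (hε : 0 < ε) (s : ℝ) :
    {i : I | a i < s ∧ (ε : EReal) < b i - (a i : EReal)}.Finite :=
  stmt0_general F V hqtame hbdd a b hiso ε hε s

end
end

section
/- Let ε > 0 and s₀, s ∈ ℝ. Suppose (a_n)_{n∈ℕ} is a sequence of real numbers and (b_n)_{n∈ℕ} a sequence in ℝ ∪ {∞} such that s₀ ≤ a_n < s and b_n − a_n > ε for every n (with the convention ∞ − a = ∞). Then there exist real numbers t′ < t such that the set {n ∈ ℕ : a_n < t′ and t ≤ b_n} (i.e., the set of n with [t′, t] ⊆ (a_n, b_n]) is infinite. -/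
open Filter Topology Set

/-!
The left endpoints `a n` lie in the compact interval `[s₀, s]`, so they have a cluster point `c`.
Infinitely many `a n` lie within `ε / 3` of `c`, and each of the corresponding intervals, being
longer than `ε`, contains `[c + ε / 3, c + 2ε / 3]`.
-/

theorem EReal.coe_add_lt_of_lt_sub {x ε : ℝ} {y : EReal} (h : (ε : EReal) < y - x) :
    ((x + ε : ℝ) : EReal) < y := by
  rw [EReal.coe_add, add_comm]
  exact (EReal.lt_sub_iff_add_lt (.inl (EReal.coe_ne_bot x)) (.inl (EReal.coe_ne_top x))).1 h

theorem MapClusterPt.frequently_lt_and_le {ι : Type*} {l : Filter ι} {a : ι → ℝ} {b : ι → EReal}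
    {c ε : ℝ} (hε : 0 < ε) (hc : MapClusterPt c l a)
    (hb : ∀ i, ((a i + ε : ℝ) : EReal) < b i) :
    ∃ᶠ i in l, a i < c + ε / 3 ∧ ((c + 2 * ε / 3 : ℝ) : EReal) ≤ b i := by
  refine (hc.frequently (Ioo_mem_nhds (a := c - ε / 3) (b := c + ε / 3) (by linarith)
    (by linarith))).mono fun i hi => ⟨hi.2, ?_⟩
  exact le_trans (EReal.coe_le_coe_iff.2 (by linarith [hi.1])) (hb i).le

/-- an infinite family of half-open intervals `(a n, b n]` (with `b n` an
extended real), all beginning in `[s₀, s)` and all of length greater than `ε > 0`, admits a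
common closed subinterval `[t', t]` contained in infinitely many of them. -/
theorem stmt1 (ε s₀ s : ℝ) (hε : 0 < ε) (a : ℕ → ℝ) (b : ℕ → EReal)
    (ha : ∀ n, s₀ ≤ a n) (has : ∀ n, a n < s)
    (hb : ∀ n, (ε : EReal) < b n - (a n : EReal)) :
    ∃ t' t : ℝ, t' < t ∧ {n : ℕ | a n < t' ∧ (t : EReal) ≤ b n}.Infinite := by
  obtain ⟨c, -, hc⟩ := (isCompact_Icc (a := s₀) (b := s)).exists_mapClusterPt (f := atTop)
    (u := a) (tendsto_principal.2 (.of_forall fun n => ⟨ha n, (has n).le⟩))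
  refine ⟨c + ε / 3, c + 2 * ε / 3, by linarith, Nat.frequently_atTop_iff_infinite.1 ?_⟩
  exact hc.frequently_lt_and_le hε fun n => EReal.coe_add_lt_of_lt_sub (hb n)
end

section
/- Let V be a persistence module over a field F satisfying conditions (PM1)–(PM4). Fix an interval I = (a,b] with −∞ < a < b ≤ ∞. For c ∈ (a,b) define, using the birth and death functions α, β on V_c, the subspaces A = {v ∈ V_c : α(v) ≤ a and β(v) ≤ b}, B = {v ∈ V_c : α(v) < a and β(v) ≤ b}, C = {v ∈ V_c : α(v) ≤ a and β(v) < b}, and set n_I(c) := dim_F A/(B + C). Then A is finite-dimensional (so n_I(c) < ∞), and n_I(c) = n_I(c′) for all c, c′ ∈ (a,b); that is, the multiplicity n_I of the bar I is well defined independently of the choice of c ∈ (a,b). -/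
open scoped Classical

noncomputable section

universe u v

/-- The birth function `α : V_c → [-∞, c)`:
`α(v) = inf {s < c | v ∈ im (π_{s c})}`, as an extended real number. -/
noncomputable def birth {F : Type u} [Field F] (V : PersistenceModule F) (c : ℝ)
    (v : V.space c) : EReal :=
  sInf {x : EReal | ∃ (s : ℝ) (h : s < c), x = (s : EReal) ∧
    v ∈ LinearMap.range (V.map h.le)}

/-- The death function `β : V_c → [c, ∞]`:
`β(v) = inf {s ≥ c | v ∈ ker (π_{c s})}`, as an extended real number (with `inf ∅ = ∞`). -/
noncomputable def death {F : Type u} [Field F] (V : PersistenceModule F) (c : ℝ)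
    (v : V.space c) : EReal :=
  sInf {x : EReal | ∃ (s : ℝ) (h : c ≤ s), x = (s : EReal) ∧ V.map h v = 0}

/-!
Fix `c ≤ c'` in `(a, b)` and let `π = π_{c c'}`. Death times only move up to `max (β v) c'`, so
the conditions `β ≤ b` and `β < b` are unchanged by `π`. By q-tameness the images `im π_{s c}`,
`s ∈ (a, c)`, stabilise at some `s₁`, and `{α ≤ a}` is exactly `im π_{s₁ c}`; hence every vector
of `V_{c'}` born by `a` is the image of a vector of `V_c` born by `a`. So `π` maps `A, B, C`
onto `A', B', C'`, and a vector of `A` killed by `π` dies by `c' < b`, i.e. lies in `C`.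
Therefore `π` induces `A/(B + C) ≅ A'/(B' + C')`. Finiteness of `A` comes from `A ≤ im π_{s₁ c}`.
-/

theorem Set.image_setOf_and_eq_of_iff {X Y : Type*} {f : X → Y} {P Q : X → Prop}
    {P' : Y → Prop} (Q' : Y → Prop) (hP : ∀ y, P' y ↔ ∃ x, P x ∧ f x = y)
    (hQ : ∀ x, Q' (f x) ↔ Q x) :
    f '' {x | P x ∧ Q x} = {y | P' y ∧ Q' y} := by
  ext y
  simp only [Set.mem_image, Set.mem_ofPred_eq, hP]
  constructor
  · rintro ⟨x, ⟨hPx, hQx⟩, rfl⟩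
    exact ⟨⟨x, hPx, rfl⟩, (hQ x).2 hQx⟩
  · rintro ⟨⟨x, hPx, rfl⟩, hQx⟩
    exact ⟨x, ⟨hPx, (hQ x).1 hQx⟩, rfl⟩

namespace Submodule

variable {R M M' : Type*} [Ring R] [AddCommGroup M] [Module R M] [AddCommGroup M'] [Module R M']

def quotientEquivMapOfKerInfLe (f : M →ₗ[R] M') {A N : Submodule R M} (hNA : N ≤ A)
    (hker : LinearMap.ker f ⊓ A ≤ N) :
    (A ⧸ N.comap A.subtype) ≃ₗ[R] (A.map f ⧸ (N.map f).comap (A.map f).subtype) :=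
  let g := ((N.map f).comap (A.map f).subtype).mkQ ∘ₗ f.submoduleMap A
  have hg : Function.Surjective g :=
    (mkQ_surjective _).comp (f.submoduleMap_surjective A)
  have hg_ker : LinearMap.ker g = N.comap A.subtype := by
    ext ⟨v, hv⟩
    simp only [g, LinearMap.mem_ker, LinearMap.comp_apply, mkQ_apply,
      Quotient.mk_eq_zero, mem_comap, subtype_apply,
      LinearMap.submoduleMap_coe_apply, mem_map]
    constructor
    · rintro ⟨w, hw, hfw⟩
      have hvw : v - w ∈ LinearMap.ker f ⊓ A :=
        ⟨by simp [hfw], sub_mem hv (hNA hw)⟩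
      simpa using add_mem (hker hvw) hw
    · exact fun hvN => ⟨v, hvN, rfl⟩
  (quotEquivOfEq _ _ hg_ker.symm).trans (g.quotKerEquivOfSurjective hg)

end Submodule

namespace PersistenceModule

variable {F : Type u} [Field F] (V : PersistenceModule F)

theorem map_map {s t r : ℝ} (hst : s ≤ t) (htr : t ≤ r) (v : V.space s) :
    V.map htr (V.map hst v) = V.map (hst.trans htr) v :=
  LinearMap.congr_fun (V.map_comp hst htr) v

theorem range_map_le_range_map {s s' c : ℝ} (hss' : s ≤ s') (hs'c : s' ≤ c) :
    LinearMap.range (V.map (hss'.trans hs'c)) ≤ LinearMap.range (V.map hs'c) := by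
  rintro v ⟨u, rfl⟩
  exact ⟨V.map hss' u, V.map_map hss' hs'c u⟩

theorem finiteDimensional_range_map
    (hV : ∀ (s t : ℝ) (h : s < t), LinearMap.rank (V.map h.le) < Cardinal.aleph0)
    {s c : ℝ} (h : s < c) : FiniteDimensional F (LinearMap.range (V.map h.le)) :=
  Module.rank_lt_aleph0_iff.mp (hV s c h)

theorem exists_range_map_eq
    (hV : ∀ (s t : ℝ) (h : s < t), LinearMap.rank (V.map h.le) < Cardinal.aleph0)
    {a c : ℝ} (hac : a < c) :
    ∃ (s₁ : ℝ) (hs₁c : s₁ < c), a < s₁ ∧ ∀ (s : ℝ) (hsc : s < c), a < s → s ≤ s₁ →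
      LinearMap.range (V.map hsc.le) = LinearMap.range (V.map hs₁c.le) := by
  have hrank : ∃ n, ∃ (s : ℝ) (hsc : s < c), a < s ∧
      Module.finrank F (LinearMap.range (V.map hsc.le)) = n :=
    ⟨_, (a + c) / 2, by linarith, by linarith, rfl⟩
  obtain ⟨s₁, hs₁c, has₁, hmin⟩ := Nat.find_spec hrank
  refine ⟨s₁, hs₁c, has₁, fun s hsc has hss₁ => ?_⟩
  have := V.finiteDimensional_range_map hV hs₁c
  refine Submodule.eq_of_le_of_finrank_le (V.range_map_le_range_map hss₁ hs₁c.le) ?_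
  rw [hmin]
  exact Nat.find_min' hrank ⟨s, hsc, has, rfl⟩

theorem birth_le_of_mem_range {c s : ℝ} (h : s < c) {v : V.space c}
    (hv : v ∈ LinearMap.range (V.map h.le)) : birth V c v ≤ s :=
  sInf_le ⟨s, h, rfl, hv⟩

theorem exists_mem_range_of_birth_lt {c : ℝ} {v : V.space c} {x : EReal}
    (hv : birth V c v < x) :
    ∃ (s : ℝ) (h : s < c), (s : EReal) < x ∧ v ∈ LinearMap.range (V.map h.le) := by
  obtain ⟨_, ⟨s, h, rfl, hvs⟩, hsx⟩ := sInf_lt_iff.mp hv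
  exact ⟨s, h, hsx, hvs⟩

theorem mem_range_of_birth_lt {c s : ℝ} {v : V.space c} (hv : birth V c v < s) (h : s < c) :
    v ∈ LinearMap.range (V.map h.le) := by
  obtain ⟨t, htc, hts, hvt⟩ := V.exists_mem_range_of_birth_lt hv
  exact V.range_map_le_range_map (EReal.coe_lt_coe_iff.mp hts).le h.le hvt

theorem birth_le_of_forall_mem_range {a c : ℝ} (hac : a < c) {v : V.space c}
    (hv : ∀ (s : ℝ) (h : s < c), a < s → v ∈ LinearMap.range (V.map h.le)) :
    birth V c v ≤ a := by
  refine le_of_forall_gt_imp_ge_of_dense fun x hax => ?_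
  obtain ⟨s, has, hsx⟩ := EReal.exists_between_coe_real (lt_min hax (EReal.coe_lt_coe hac))
  have hsc : s < c := EReal.coe_lt_coe_iff.mp (hsx.trans_le (min_le_right _ _))
  exact (V.birth_le_of_mem_range hsc (hv s hsc (EReal.coe_lt_coe_iff.mp has))).trans
    (hsx.le.trans (min_le_left _ _))

theorem exists_birth_le_iff_mem_range
    (hV : ∀ (s t : ℝ) (h : s < t), LinearMap.rank (V.map h.le) < Cardinal.aleph0)
    {a c : ℝ} (hac : a < c) :
    ∃ (s₁ : ℝ) (hs₁c : s₁ < c), a < s₁ ∧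
      ∀ v, birth V c v ≤ a ↔ v ∈ LinearMap.range (V.map hs₁c.le) := by
  obtain ⟨s₁, hs₁c, has₁, hstab⟩ := V.exists_range_map_eq hV hac
  refine ⟨s₁, hs₁c, has₁, fun v => ⟨fun hv => ?_, fun hv => ?_⟩⟩
  · exact V.mem_range_of_birth_lt (hv.trans_lt (EReal.coe_lt_coe has₁)) hs₁c
  · refine V.birth_le_of_forall_mem_range hac fun s hsc has => ?_
    rcases le_total s s₁ with hss₁ | hs₁s
    · rwa [hstab s hsc has hss₁]
    · exact V.range_map_le_range_map hs₁s hsc.le hv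

theorem birth_map_le {c c' : ℝ} (hcc' : c ≤ c') (v : V.space c) :
    birth V c' (V.map hcc' v) ≤ birth V c v := by
  refine sInf_le_sInf ?_
  rintro _ ⟨s, hsc, rfl, u, rfl⟩
  exact ⟨s, hsc.trans_le hcc', rfl, u, (V.map_map hsc.le hcc' u).symm⟩

theorem birth_le_iff_exists_map_eq
    (hV : ∀ (s t : ℝ) (h : s < t), LinearMap.rank (V.map h.le) < Cardinal.aleph0)
    {a c c' : ℝ} (hcc' : c ≤ c') (hac : a < c) (v' : V.space c') :
    birth V c' v' ≤ a ↔ ∃ v, birth V c v ≤ a ∧ V.map hcc' v = v' := by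
  constructor
  · intro hv'
    obtain ⟨s₁, hs₁c, has₁, hborn⟩ := V.exists_birth_le_iff_mem_range hV hac
    obtain ⟨u, rfl⟩ := V.mem_range_of_birth_lt (hv'.trans_lt (EReal.coe_lt_coe has₁))
      (hs₁c.trans_le hcc')
    exact ⟨V.map hs₁c.le u, (hborn _).2 ⟨u, rfl⟩, V.map_map _ _ u⟩
  · rintro ⟨v, hv, rfl⟩
    exact (V.birth_map_le hcc' v).trans hv

theorem birth_lt_iff_exists_map_eq {a c c' : ℝ} (hcc' : c ≤ c') (hac : a ≤ c)
    (v' : V.space c') :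
    birth V c' v' < a ↔ ∃ v, birth V c v < a ∧ V.map hcc' v = v' := by
  constructor
  · intro hv'
    obtain ⟨s, -, hsa, u, rfl⟩ := V.exists_mem_range_of_birth_lt hv'
    have hsc : s < c := (EReal.coe_lt_coe_iff.mp hsa).trans_le hac
    exact ⟨V.map hsc.le u, (V.birth_le_of_mem_range hsc ⟨u, rfl⟩).trans_lt hsa,
      V.map_map _ _ u⟩
  · rintro ⟨v, hv, rfl⟩
    exact (V.birth_map_le hcc' v).trans_lt hv

theorem le_death (c : ℝ) (v : V.space c) : (c : EReal) ≤ death V c v :=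
  le_sInf fun _ ⟨_, hs, hx, _⟩ => hx ▸ EReal.coe_le_coe hs

theorem death_le_of_map_eq_zero {c s : ℝ} (h : c ≤ s) {v : V.space c} (hv : V.map h v = 0) :
    death V c v ≤ s :=
  sInf_le ⟨s, h, rfl, hv⟩

theorem death_le_death_map {c c' : ℝ} (hcc' : c ≤ c') (v : V.space c) :
    death V c v ≤ death V c' (V.map hcc' v) := by
  refine sInf_le_sInf ?_
  rintro _ ⟨s, hs, rfl, hv⟩
  exact ⟨s, hcc'.trans hs, rfl, by rwa [← V.map_map hcc' hs]⟩

theorem death_map {c c' : ℝ} (hcc' : c ≤ c') (v : V.space c) :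
    death V c' (V.map hcc' v) = max (death V c v) c' := by
  refine le_antisymm (le_of_forall_gt_imp_ge_of_dense fun x hx => ?_)
    (max_le (V.death_le_death_map hcc' v) (V.le_death c' _))
  obtain ⟨_, ⟨s, hcs, rfl, hv⟩, hsx⟩ := sInf_lt_iff.mp ((le_max_left _ _).trans_lt hx)
  have hvanish : V.map (le_max_right s c') (V.map hcc' v) = 0 := by
    rw [V.map_map, ← V.map_map hcs (le_max_left s c'), hv, map_zero]
  calc death V c' (V.map hcc' v) ≤ (max s c' : ℝ) := V.death_le_of_map_eq_zero _ hvanish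
    _ ≤ x := by
      rw [EReal.coe_strictMono.monotone.map_max]
      exact max_le hsx.le ((le_max_right _ _).trans hx.le)

theorem death_map_le_iff {c c' : ℝ} (hcc' : c ≤ c') {b : EReal} (hc'b : (c' : EReal) ≤ b)
    (v : V.space c) : death V c' (V.map hcc' v) ≤ b ↔ death V c v ≤ b := by
  rw [V.death_map, max_le_iff, and_iff_left hc'b]

theorem death_map_lt_iff {c c' : ℝ} (hcc' : c ≤ c') {b : EReal} (hc'b : (c' : EReal) < b)
    (v : V.space c) : death V c' (V.map hcc' v) < b ↔ death V c v < b := by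
  rw [V.death_map, max_lt_iff, and_iff_left hc'b]

theorem finiteDimensional_of_birth_le
    (hV : ∀ (s t : ℝ) (h : s < t), LinearMap.rank (V.map h.le) < Cardinal.aleph0)
    {a c : ℝ} (hac : a < c) (A : Submodule F (V.space c))
    (hA : ∀ v ∈ A, birth V c v ≤ a) : FiniteDimensional F A := by
  obtain ⟨s₁, hs₁c, -, hborn⟩ := V.exists_birth_le_iff_mem_range hV hac
  have := V.finiteDimensional_range_map hV hs₁c
  exact Submodule.finiteDimensional_of_le fun v hv => (hborn v).1 (hA v hv)

theorem finrank_quotient_eq_of_le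
    (hV : ∀ (s t : ℝ) (h : s < t), LinearMap.rank (V.map h.le) < Cardinal.aleph0)
    {a : ℝ} {b : EReal} {c c' : ℝ} (hcc' : c ≤ c') (hac : a < c) (hc'b : (c' : EReal) < b)
    (A B C : Submodule F (V.space c))
    (hA : (A : Set (V.space c)) = {v | birth V c v ≤ (a : EReal) ∧ death V c v ≤ b})
    (hB : (B : Set (V.space c)) = {v | birth V c v < (a : EReal) ∧ death V c v ≤ b})
    (hC : (C : Set (V.space c)) = {v | birth V c v ≤ (a : EReal) ∧ death V c v < b})
    (A' B' C' : Submodule F (V.space c'))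
    (hA' : (A' : Set (V.space c')) = {v | birth V c' v ≤ (a : EReal) ∧ death V c' v ≤ b})
    (hB' : (B' : Set (V.space c')) = {v | birth V c' v < (a : EReal) ∧ death V c' v ≤ b})
    (hC' : (C' : Set (V.space c')) = {v | birth V c' v ≤ (a : EReal) ∧ death V c' v < b}) :
    Module.finrank F (↥A ⧸ Submodule.comap A.subtype (B ⊔ C)) =
      Module.finrank F (↥A' ⧸ Submodule.comap A'.subtype (B' ⊔ C')) := by
  set π := V.map hcc'
  have hA'_eq : A' = A.map π := SetLike.coe_injective <| by
    rw [Submodule.map_coe, hA, hA', Set.image_setOf_and_eq_of_iff (death V c' · ≤ b)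
      (V.birth_le_iff_exists_map_eq hV hcc' hac) (V.death_map_le_iff hcc' hc'b.le)]
  have hB'_eq : B' = B.map π := SetLike.coe_injective <| by
    rw [Submodule.map_coe, hB, hB', Set.image_setOf_and_eq_of_iff (death V c' · ≤ b)
      (V.birth_lt_iff_exists_map_eq hcc' hac.le) (V.death_map_le_iff hcc' hc'b.le)]
  have hC'_eq : C' = C.map π := SetLike.coe_injective <| by
    rw [Submodule.map_coe, hC, hC', Set.image_setOf_and_eq_of_iff (death V c' · < b)
      (V.birth_le_iff_exists_map_eq hV hcc' hac) (V.death_map_lt_iff hcc' hc'b)]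
  have hBC_le_A : B ⊔ C ≤ A := by
    refine sup_le (SetLike.coe_subset_coe.1 ?_) (SetLike.coe_subset_coe.1 ?_)
    · rw [hA, hB]
      exact fun v hv => ⟨hv.1.le, hv.2⟩
    · rw [hA, hC]
      exact fun v hv => ⟨hv.1, hv.2.le⟩
  have hker : LinearMap.ker π ⊓ A ≤ B ⊔ C := by
    intro v hv
    obtain ⟨hπv, hvA⟩ := Submodule.mem_inf.1 hv
    rw [← SetLike.mem_coe, hA] at hvA
    refine Submodule.mem_sup_right ?_
    rw [← SetLike.mem_coe, hC]
    exact ⟨hvA.1, (V.death_le_of_map_eq_zero hcc' hπv).trans_lt hc'b⟩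
  subst hA'_eq hB'_eq hC'_eq
  rw [← Submodule.map_sup]
  exact (Submodule.quotientEquivMapOfKerInfLe π hBC_le_A hker).finrank_eq

end PersistenceModule

theorem stmt4_general (F : Type u) [Field F] (V : PersistenceModule F)
    -- (PM2): q-tameness.
    (hPM2 : ∀ (s t : ℝ) (h : s < t), LinearMap.rank (V.map h.le) < Cardinal.aleph0)
    -- the bar `I = (a, b]` and two points `c, c'` of `(a, b)`
    (a : ℝ) (b : EReal)
    (c : ℝ) (hc1 : a < c) (hc2 : (c : EReal) < b)
    (c' : ℝ) (hc'1 : a < c') (hc'2 : (c' : EReal) < b)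
    -- the subspaces `A`, `B`, `C` at `c` and at `c'`
    (A B C : Submodule F (V.space c))
    (hA : (A : Set (V.space c)) = {v | birth V c v ≤ (a : EReal) ∧ death V c v ≤ b})
    (hB : (B : Set (V.space c)) = {v | birth V c v < (a : EReal) ∧ death V c v ≤ b})
    (hC : (C : Set (V.space c)) = {v | birth V c v ≤ (a : EReal) ∧ death V c v < b})
    (A' B' C' : Submodule F (V.space c'))
    (hA' : (A' : Set (V.space c')) = {v | birth V c' v ≤ (a : EReal) ∧ death V c' v ≤ b})
    (hB' : (B' : Set (V.space c')) = {v | birth V c' v < (a : EReal) ∧ death V c' v ≤ b})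
    (hC' : (C' : Set (V.space c')) = {v | birth V c' v ≤ (a : EReal) ∧ death V c' v < b}) :
    FiniteDimensional F A ∧
      Module.finrank F (↥A ⧸ Submodule.comap A.subtype (B ⊔ C)) =
        Module.finrank F (↥A' ⧸ Submodule.comap A'.subtype (B' ⊔ C')) := by
  refine ⟨V.finiteDimensional_of_birth_le hPM2 hc1 A fun v hv => ?_, ?_⟩
  · rw [← SetLike.mem_coe, hA] at hv
    exact hv.1
  rcases le_total c c' with hcc' | hc'c
  · exact V.finrank_quotient_eq_of_le hPM2 hcc' hc1 hc'2 A B C hA hB hC A' B' C' hA' hB' hC'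
  · exact (V.finrank_quotient_eq_of_le hPM2 hc'c hc'1 hc2 A' B' C' hA' hB' hC' A B C hA hB hC).symm

/-- for a persistence module satisfying (PM1)-(PM4) and a bar `I = (a, b]`,
the subspace `A ⊆ V_c` is finite-dimensional and the multiplicity
`n_I(c) = dim A/(B + C)` is independent of the choice of `c ∈ (a, b)`. -/
theorem stmt4 (F : Type u) [Field F] (V : PersistenceModule F)
    -- (PM1): a closed, nowhere dense, bounded-below spectrum `S`, outside of which `V` is
    -- locally constant (structure maps between points of the same connected component of
    -- `ℝ \ S` are isomorphisms).
    (S : Set ℝ) (hSclosed : IsClosed S) (hSnwd : interior (closure S) = ∅)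
    (hSbdd : BddBelow S)
    (hPM1 : ∀ (s t : ℝ) (h : s ≤ t), s ∈ Sᶜ → t ∈ connectedComponentIn Sᶜ s →
      Function.Bijective (V.map h))
    -- (PM2): q-tameness.
    (hPM2 : ∀ (s t : ℝ) (h : s < t), LinearMap.rank (V.map h.le) < Cardinal.aleph0)
    -- (PM3): left-semicontinuity, i.e. the canonical map `colim_{s<t} V_s → V_t` is an
    -- isomorphism, expressed elementwise (surjectivity and injectivity of the colimit map).
    (hPM3a : ∀ (t : ℝ) (v : V.space t), ∃ (s : ℝ) (h : s < t),
      v ∈ LinearMap.range (V.map h.le))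
    (hPM3b : ∀ (s t : ℝ) (h : s < t) (v : V.space s), V.map h.le v = 0 →
      ∃ (r : ℝ) (h1 : s ≤ r), r < t ∧ V.map h1 v = 0)
    -- (PM4): boundedness from below.
    (hPM4 : ∃ s₀ : ℝ, ∀ s : ℝ, s < s₀ → ∀ v : V.space s, v = 0)
    -- the bar `I = (a, b]` and two points `c, c'` of `(a, b)`
    (a : ℝ) (b : EReal) (hab : (a : EReal) < b)
    (c : ℝ) (hc1 : a < c) (hc2 : (c : EReal) < b)
    (c' : ℝ) (hc'1 : a < c') (hc'2 : (c' : EReal) < b)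
    -- the subspaces `A`, `B`, `C` at `c` and at `c'`
    (A B C : Submodule F (V.space c))
    (hA : (A : Set (V.space c)) = {v | birth V c v ≤ (a : EReal) ∧ death V c v ≤ b})
    (hB : (B : Set (V.space c)) = {v | birth V c v < (a : EReal) ∧ death V c v ≤ b})
    (hC : (C : Set (V.space c)) = {v | birth V c v ≤ (a : EReal) ∧ death V c v < b})
    (A' B' C' : Submodule F (V.space c'))
    (hA' : (A' : Set (V.space c')) = {v | birth V c' v ≤ (a : EReal) ∧ death V c' v ≤ b})
    (hB' : (B' : Set (V.space c')) = {v | birth V c' v < (a : EReal) ∧ death V c' v ≤ b})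
    (hC' : (C' : Set (V.space c')) = {v | birth V c' v ≤ (a : EReal) ∧ death V c' v < b}) :
    FiniteDimensional F A ∧
      Module.finrank F (↥A ⧸ Submodule.comap A.subtype (B ⊔ C)) =
        Module.finrank F (↥A' ⧸ Submodule.comap A'.subtype (B' ⊔ C')) :=
  stmt4_general F V hPM2 a b c hc1 hc2 c' hc'1 hc'2 A B C hA hB hC A' B' C' hA' hB' hC'

end
end

section
/- Let (a_i, b_i], i ∈ I, be a family of intervals with a_i ∈ ℝ and b_i ∈ (a_i, ∞], and suppose that for every ε > 0 and s ∈ ℝ the set {i ∈ I : a_i < s and b_i − a_i > ε} is finite (with the convention ∞ − a = ∞); write 𝔟_ε(s) for its cardinality. Then for every ε > 0 and s ∈ ℝ there exists δ > 0 such that 𝔟_{ε′}(s′) = 𝔟_ε(s) whenever ε ≤ ε′ < ε + δ and s − δ < s′ ≤ s. In other words, 𝔟_ε(s) is right semi-continuous in ε and left semi-continuous in s. -/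
/-- The barcode counting function: the number of bars `(a i, b i]` of length `> ε`
beginning below `s`, counted with multiplicity. -/
noncomputable def bcount {I : Type*} (a : I → ℝ) (b : I → EReal) (ε s : ℝ) : ℕ :=
  {i : I | a i < s ∧ (ε : EReal) < b i - (a i : EReal)}.ncard

/-!
A bar counted by `𝔟_ε(s)` is cut out by two strict inequalities, so it is still counted after
any small enough perturbation of `(ε, s)`; as there are only finitely many such bars, one
perturbation size works for all of them. Conversely, increasing `ε` or decreasing `s` can only
lose bars, so near `(ε, s)` from the right in `ε` and from the left in `s` the set of counted bars
does not change at all.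
-/

open Filter Topology

namespace Barcode

variable {I : Type*} (a : I → ℝ) (b : I → EReal)

def bars (ε s : ℝ) : Set I :=
  {i : I | a i < s ∧ (ε : EReal) < b i - (a i : EReal)}

theorem bcount_eq_ncard_bars (ε s : ℝ) : bcount a b ε s = (bars a b ε s).ncard := rfl

variable {a b}

theorem bars_anti {ε ε' s s' : ℝ} (hε : ε ≤ ε') (hs : s' ≤ s) :
    bars a b ε' s' ⊆ bars a b ε s :=
  fun _ ⟨has, hlen⟩ => ⟨has.trans_le hs, lt_of_le_of_lt (EReal.coe_le_coe_iff.2 hε) hlen⟩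

theorem isOpen_setOf_mem_bars (i : I) : IsOpen {p : ℝ × ℝ | i ∈ bars a b p.1 p.2} :=
  (isOpen_lt continuous_const continuous_snd).inter
    (isOpen_lt (continuous_coe_real_ereal.comp continuous_fst) continuous_const)

theorem eventually_bars_subset {ε s : ℝ} (hfin : (bars a b ε s).Finite) :
    ∀ᶠ p : ℝ × ℝ in 𝓝 (ε, s), bars a b ε s ⊆ bars a b p.1 p.2 :=
  (hfin.eventually_all.2 fun i hi => (isOpen_setOf_mem_bars i).mem_nhds hi).mono
    fun _ hp i hi => hp i hi

end Barcode

open Barcode in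
/-- if all the counting sets are finite, then `𝔟_ε(s)` is right
semi-continuous in `ε` and left semi-continuous in `s`: `𝔟_{ε'}(s') = 𝔟_ε(s)` whenever
`ε ≤ ε' < ε + δ` and `s - δ < s' ≤ s` for some `δ > 0`. -/
theorem stmt7 {I : Type*} (a : I → ℝ) (b : I → EReal)
    (hfin : ∀ ε : ℝ, 0 < ε → ∀ s : ℝ,
      {i : I | a i < s ∧ (ε : EReal) < b i - (a i : EReal)}.Finite)
    (ε : ℝ) (hε : 0 < ε) (s : ℝ) :
    ∃ δ > 0, ∀ ε' s' : ℝ, ε ≤ ε' → ε' < ε + δ → s - δ < s' → s' ≤ s →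
      bcount a b ε' s' = bcount a b ε s := by
  obtain ⟨δ, hδ, hnear⟩ := Metric.eventually_nhds_iff.1 (eventually_bars_subset (hfin ε hε s))
  refine ⟨δ, hδ, fun ε' s' hε₁ hε₂ hs₁ hs₂ => ?_⟩
  have hdist : dist (ε', s') (ε, s) < δ := by
    rw [Prod.dist_eq, max_lt_iff, Real.dist_eq, Real.dist_eq, abs_sub_lt_iff, abs_sub_lt_iff]
    refine ⟨⟨?_, ?_⟩, ?_, ?_⟩ <;> linarith
  rw [bcount_eq_ncard_bars, bcount_eq_ncard_bars,
    (bars_anti hε₁ hs₂).antisymm (hnear hdist)]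
end

section
/- Let S ⊆ ℝ be a closed set and let (a_i, b_i], i ∈ I, be a family of intervals with a_i ∈ S and b_i ∈ S ∪ {∞}, b_i > a_i, such that for every ε > 0 and s ∈ ℝ the set {i ∈ I : a_i < s and b_i − a_i > ε} is finite; write 𝔟_ε(s) for its cardinality. Then: (i) for every ε > 0 the function s ↦ 𝔟_ε(s) is constant on every connected component of ℝ∖S; (ii) for every s ∈ ℝ the function ε ↦ 𝔟_ε(s) is constant on every connected component of (0,∞)∖(S−S), where S−S := {x − y : x, y ∈ S}. -/
namespace Set.OrdConnected

variable {α : Type*} [LinearOrder α] {C : Set α} {x s t : α}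

theorem lt_iff_lt_of_notMem (hC : C.OrdConnected) (hx : x ∉ C) (hs : s ∈ C) (ht : t ∈ C) :
    x < s ↔ x < t := by
  have key : ∀ {u v}, u ∈ C → v ∈ C → x < u → x < v := fun hu hv hxu =>
    lt_of_not_ge fun hvx => hx (hC.out hv hu ⟨hvx, hxu.le⟩)
  exact ⟨key hs ht, key ht hs⟩

theorem lt_iff_lt_of_notMem' (hC : C.OrdConnected) (hx : x ∉ C) (hs : s ∈ C) (ht : t ∈ C) :
    s < x ↔ t < x := by
  have key : ∀ {u v}, u ∈ C → v ∈ C → u < x → v < x := fun hu hv hux =>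
    lt_of_not_ge fun hxv => hx (hC.out hu hv ⟨hux.le, hxv⟩)
  exact ⟨key hs ht, key ht hs⟩

end Set.OrdConnected

section bcount

variable {I : Type*} (a : I → ℝ) (b : I → EReal)

theorem bcount_eq_of_forall_lt_iff {ε s t : ℝ} (h : ∀ i, a i < s ↔ a i < t) :
    bcount a b ε s = bcount a b ε t := by
  unfold bcount
  congr 1
  ext i
  exact and_congr_left' (h i)

theorem bcount_eq_of_forall_length_iff {ε ε' s : ℝ}
    (h : ∀ i, (ε : EReal) < b i - a i ↔ (ε' : EReal) < b i - a i) :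
    bcount a b ε s = bcount a b ε' s := by
  unfold bcount
  congr 1
  ext i
  exact and_congr_right' (h i)

end bcount

theorem EReal.coe_lt_sub_coe_iff_of_ordConnected {C : Set ℝ} (hC : C.OrdConnected)
    {ε ε' x : ℝ} (hε : ε ∈ C) (hε' : ε' ∈ C) {y : EReal}
    (hy : y = ⊤ ∨ ∃ r : ℝ, y = r ∧ r - x ∉ C) :
    (ε : EReal) < y - x ↔ (ε' : EReal) < y - x := by
  rcases hy with rfl | ⟨r, rfl, hr⟩
  · simp
  · rw [← EReal.coe_sub, EReal.coe_lt_coe_iff, EReal.coe_lt_coe_iff]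
    exact hC.lt_iff_lt_of_notMem' hr hε hε'

theorem stmt8_general (S : Set ℝ)
    {I : Type*} (a : I → ℝ) (b : I → EReal)
    (haS : ∀ i, a i ∈ S)
    (hbS : ∀ i, b i = ⊤ ∨ ∃ r ∈ S, b i = (r : EReal)) :
    (∀ ε : ℝ, 0 < ε → ∀ s t : ℝ, s ∈ Sᶜ → t ∈ connectedComponentIn Sᶜ s →
      bcount a b ε s = bcount a b ε t) ∧
    (∀ s : ℝ, ∀ ε ε' : ℝ,
      ε ∈ {x : ℝ | 0 < x ∧ x ∉ {d : ℝ | ∃ u ∈ S, ∃ v ∈ S, d = u - v}} →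
      ε' ∈ connectedComponentIn
        {x : ℝ | 0 < x ∧ x ∉ {d : ℝ | ∃ u ∈ S, ∃ v ∈ S, d = u - v}} ε →
      bcount a b ε s = bcount a b ε' s) := by
  refine ⟨fun ε _ s t hs ht => ?_, fun s ε ε' hε hε' => ?_⟩
  · refine bcount_eq_of_forall_lt_iff a b fun i => ?_
    exact isPreconnected_connectedComponentIn.ordConnected.lt_iff_lt_of_notMem
      (fun h => connectedComponentIn_subset Sᶜ s h (haS i)) (mem_connectedComponentIn hs) ht
  · refine bcount_eq_of_forall_length_iff a b fun i => ?_
    refine EReal.coe_lt_sub_coe_iff_of_ordConnected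
      isPreconnected_connectedComponentIn.ordConnected (mem_connectedComponentIn hε) hε' ?_
    refine (hbS i).imp_right fun ⟨r, hrS, hr⟩ => ⟨r, hr, fun h => ?_⟩
    exact (connectedComponentIn_subset _ _ h).2 ⟨r, hrS, a i, haS i, rfl⟩

/-- for a barcode with spectrum contained in a closed set `S ⊆ ℝ` (all left
endpoints `a i` lie in `S` and all finite right endpoints `b i` lie in `S`), the counting
function `𝔟_ε(s)`: (i) is constant in `s` on every connected component of `ℝ \ S`;
(ii) is constant in `ε` on every connected component of `(0, ∞) \ (S - S)`. -/
theorem stmt8 (S : Set ℝ) (hSclosed : IsClosed S)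
    {I : Type*} (a : I → ℝ) (b : I → EReal)
    (haS : ∀ i, a i ∈ S)
    (hbS : ∀ i, b i = ⊤ ∨ ∃ r ∈ S, b i = (r : EReal))
    (hab : ∀ i, (a i : EReal) < b i)
    (hfin : ∀ ε : ℝ, 0 < ε → ∀ s : ℝ,
      {i : I | a i < s ∧ (ε : EReal) < b i - (a i : EReal)}.Finite) :
    (∀ ε : ℝ, 0 < ε → ∀ s t : ℝ, s ∈ Sᶜ → t ∈ connectedComponentIn Sᶜ s →
      bcount a b ε s = bcount a b ε t) ∧
    (∀ s : ℝ, ∀ ε ε' : ℝ,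
      ε ∈ {x : ℝ | 0 < x ∧ x ∉ {d : ℝ | ∃ u ∈ S, ∃ v ∈ S, d = u - v}} →
      ε' ∈ connectedComponentIn
        {x : ℝ | 0 < x ∧ x ∉ {d : ℝ | ∃ u ∈ S, ∃ v ∈ S, d = u - v}} ε →
      bcount a b ε s = bcount a b ε' s) :=
  stmt8_general S a b haS hbS
end
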